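/- For density matrices ρ,σ with σ positive definite, the function α ↦ χ²_α(ρ,σ) := tr[(ρ-σ)σ^{-α}(ρ-σ)σ^{α-1}] is convex on [0,1]; explicitly, its second derivative equals ∑_{k,l} μ_k^{α-1} μ_l^{-α} (log μ_k - log μ_l)² |⟨k|(ρ-σ)|l⟩|² ≥ 0, where σ = ∑ μ_k |k⟩⟨k|. -/

import Mathlib

open Matrix
open scoped ComplexOrder

/-- The trace norm `‖A‖₁ = tr √(A†A)` of a complex matrix. -/
noncomputable def traceNorm {d : ℕ} (A : Matrix (Fin d) (Fin d) ℂ) : ℝ :=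
  (((Matrix.posSemidef_conjTranspose_mul_self A).1.eigenvectorUnitary : Matrix (Fin d) (Fin d) ℂ) *
    Matrix.diagonal (((↑) : ℝ → ℂ) ∘ (√·) ∘ (Matrix.posSemidef_conjTranspose_mul_self A).1.eigenvalues) *
    (star (Matrix.posSemidef_conjTranspose_mul_self A).1.eigenvectorUnitary :
      Matrix (Fin d) (Fin d) ℂ)).trace.re

/-- Real matrix power of a Hermitian matrix via the spectral decomposition
(defined as `0` on the kernel for negative exponents, i.e. a pseudo-inverse,
and as the junk value `0` for non-Hermitian input). -/
noncomputable def mrpow {d : ℕ} (σ : Matrix (Fin d) (Fin d) ℂ) (α : ℝ) :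
    Matrix (Fin d) (Fin d) ℂ :=
  if hσ : σ.IsHermitian then
    (hσ.eigenvectorUnitary : Matrix (Fin d) (Fin d) ℂ) *
      Matrix.diagonal (fun i => ((hσ.eigenvalues i ^ α : ℝ) : ℂ)) *
      star (hσ.eigenvectorUnitary : Matrix (Fin d) (Fin d) ℂ)
  else 0

/-- The mean α-family of quantum χ²-divergences
`χ²_α(ρ,σ) = tr[(ρ-σ) σ^{-α} (ρ-σ) σ^{α-1}]` (with pseudo-inverse powers of `σ`). -/
noncomputable def chiAlpha {d : ℕ} (α : ℝ) (ρ σ : Matrix (Fin d) (Fin d) ℂ) : ℝ :=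
  (((ρ - σ) * mrpow σ (-α) * (ρ - σ) * mrpow σ (α - 1)).trace).re

/-!
In an eigenbasis `σ = ∑ μ_k |k⟩⟨k|`, with `M = U† (ρ - σ) U` Hermitian,
`χ²_α(ρ,σ) = ∑_{k,l} |M_{kl}|² μ_l^{-α} μ_k^{α-1} = ∑_{k,l} |M_{kl}|² μ_k⁻¹ (μ_k / μ_l)^α`,
a nonnegative combination of exponentials in `α`, hence convex.
-/

theorem ConvexOn.sum {𝕜 E β ι : Type*} [Semiring 𝕜] [PartialOrder 𝕜] [AddCommMonoid E]
    [AddCommMonoid β] [PartialOrder β] [IsOrderedAddMonoid β] [SMul 𝕜 E] [Module 𝕜 β]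
    {s : Set E} (hs : Convex 𝕜 s) (t : Finset ι) {f : ι → E → β}
    (hf : ∀ i ∈ t, ConvexOn 𝕜 s (f i)) :
    ConvexOn 𝕜 s (fun x => ∑ i ∈ t, f i x) := by
  classical
  induction t using Finset.induction with
  | empty => simpa using convexOn_const 0 hs
  | insert a t hat ih =>
    simp only [Finset.sum_insert hat]
    exact (hf a (t.mem_insert_self a)).add (ih fun i hi => hf i (Finset.mem_insert_of_mem hi))

theorem convexOn_rpow_neg_mul_rpow_sub_one {a b : ℝ} (ha : 0 < a) (hb : 0 < b) :
    ConvexOn ℝ Set.univ (fun x : ℝ => a ^ (-x) * b ^ (x - 1)) := by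
  have hrw : (fun x : ℝ => a ^ (-x) * b ^ (x - 1)) = fun x => b⁻¹ • (b / a) ^ x := by
    ext x
    rw [Real.rpow_neg ha.le, Real.rpow_sub_one hb.ne', Real.div_rpow hb.le ha.le, smul_eq_mul]
    field_simp
  rw [hrw]
  exact (convexOn_rpow_left (div_pos hb ha)).smul (inv_nonneg.2 hb.le)

theorem Matrix.IsHermitian.trace_mul_diagonal_mul_mul_diagonal {n : Type*} [Fintype n]
    [DecidableEq n] {M : Matrix n n ℂ} (hM : M.IsHermitian) (a b : n → ℝ) :
    (M * diagonal (fun i => (a i : ℂ)) * M * diagonal (fun i => (b i : ℂ))).trace =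
      ((∑ k, ∑ l, Complex.normSq (M k l) * (a l * b k) : ℝ) : ℂ) := by
  have hconj : ∀ k l, M l k = starRingEnd ℂ (M k l) := fun k l => (hM.apply l k).symm
  simp only [trace, diag, mul_diagonal, Complex.ofReal_sum]
  refine Finset.sum_congr rfl fun k _ => ?_
  rw [mul_apply, Finset.sum_mul]
  refine Finset.sum_congr rfl fun l _ => ?_
  rw [mul_diagonal, hconj k l, Complex.ofReal_mul, ← Complex.mul_conj, Complex.ofReal_mul]
  ring

theorem mrpow_of_isHermitian {d : ℕ} {σ : Matrix (Fin d) (Fin d) ℂ} (hσ : σ.IsHermitian) (s : ℝ) :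
    mrpow σ s = (hσ.eigenvectorUnitary : Matrix (Fin d) (Fin d) ℂ) *
      diagonal (fun i => ((hσ.eigenvalues i ^ s : ℝ) : ℂ)) *
      star (hσ.eigenvectorUnitary : Matrix (Fin d) (Fin d) ℂ) :=
  dif_pos hσ

theorem trace_mul_mrpow_mul_mul_mrpow {d : ℕ} {A σ : Matrix (Fin d) (Fin d) ℂ}
    (hA : A.IsHermitian) (hσ : σ.IsHermitian) (s t : ℝ) :
    (A * mrpow σ s * A * mrpow σ t).trace =
      ((∑ k, ∑ l, Complex.normSq ((star (hσ.eigenvectorUnitary : Matrix (Fin d) (Fin d) ℂ) *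
        A * hσ.eigenvectorUnitary) k l) * (hσ.eigenvalues l ^ s * hσ.eigenvalues k ^ t) : ℝ) : ℂ) := by
  set U : Matrix (Fin d) (Fin d) ℂ := (hσ.eigenvectorUnitary : Matrix (Fin d) (Fin d) ℂ)
  have hM : (star U * A * U).IsHermitian := by
    simpa [star_eq_conjTranspose, Matrix.mul_assoc] using isHermitian_conjTranspose_mul_mul U hA
  rw [← hM.trace_mul_diagonal_mul_mul_diagonal, mrpow_of_isHermitian hσ, mrpow_of_isHermitian hσ]
  simp only [Matrix.mul_assoc]
  -- cyclicity of the trace: move `star U` from the front of the right-hand side to the back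
  rw [trace_mul_comm (star U)]
  simp only [Matrix.mul_assoc]
  rfl

theorem chiAlpha_eq_sum {d : ℕ} {ρ σ : Matrix (Fin d) (Fin d) ℂ} (hρ : ρ.IsHermitian)
    (hσ : σ.IsHermitian) (α : ℝ) :
    chiAlpha α ρ σ =
      ∑ k, ∑ l, Complex.normSq ((star (hσ.eigenvectorUnitary : Matrix (Fin d) (Fin d) ℂ) *
        (ρ - σ) * hσ.eigenvectorUnitary) k l) *
          (hσ.eigenvalues l ^ (-α) * hσ.eigenvalues k ^ (α - 1)) := by
  rw [chiAlpha, trace_mul_mrpow_mul_mul_mrpow (hρ.sub hσ), Complex.ofReal_re]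

theorem chiAlpha_convex_general (d : ℕ) (ρ σ : Matrix (Fin d) (Fin d) ℂ)
    (hρ : ρ.PosSemidef)
    (hσ : σ.PosDef) :
    ConvexOn ℝ (Set.Icc (0 : ℝ) 1) (fun α => chiAlpha α ρ σ) := by
  simp_rw [chiAlpha_eq_sum hρ.1 hσ.1]
  refine ConvexOn.sum (convex_Icc 0 1) _ fun k _ => ConvexOn.sum (convex_Icc 0 1) _ fun l _ => ?_
  exact ((convexOn_rpow_neg_mul_rpow_sub_one (hσ.eigenvalues_pos l)
    (hσ.eigenvalues_pos k)).smul (Complex.normSq_nonneg _)).subset (Set.subset_univ _)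
    (convex_Icc 0 1)

/-- For density matrices `ρ, σ` with `σ` positive definite, the map
`α ↦ χ²_α(ρ,σ) = tr[(ρ-σ)σ^{-α}(ρ-σ)σ^{α-1}]` is convex on `[0,1]`. -/
theorem chiAlpha_convex (d : ℕ) (ρ σ : Matrix (Fin d) (Fin d) ℂ)
    (hρ : ρ.PosSemidef) (hρtr : ρ.trace = 1)
    (hσ : σ.PosDef) (hσtr : σ.trace = 1) :
    ConvexOn ℝ (Set.Icc (0 : ℝ) 1) (fun α => chiAlpha α ρ σ) :=
  chiAlpha_convex_general d ρ σ hρ hσ
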